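/- arXiv:1608.00632 — 4 statements merged into one kernel-verified Lean document; each statement's English description precedes it below -/
import Mathlib

section
/- If 𝐗 = (X; Y) is a frame for a Lagrangian subspace of ℝ^{2n}, then the complex n×n matrices X + iY and X − iY are both invertible. -/
open Matrix

noncomputable section

/-- The standard symplectic matrix `J = [[0, -I],[I, 0]]` on `ℝ^{2n}`,
with `ℝ^{2n}` modeled as `Fin n ⊕ Fin n → ℝ`. -/
def Jmat (n : ℕ) : Matrix (Fin n ⊕ Fin n) (Fin n ⊕ Fin n) ℝ :=
  Matrix.fromBlocks 0 (-1) 1 0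

/-- A subspace `ℓ ⊆ ℝ^{2n}` is Lagrangian if it has dimension `n` and
`(Jx, y) = 0` for all `x, y ∈ ℓ`. -/
def IsLagrangian (n : ℕ) (ℓ : Submodule ℝ (Fin n ⊕ Fin n → ℝ)) : Prop :=
  Module.finrank ℝ ℓ = n ∧ ∀ x ∈ ℓ, ∀ y ∈ ℓ, (Jmat n).mulVec x ⬝ᵥ y = 0

/-- A `2n × n` matrix `M` is a frame for the subspace `ℓ ⊆ ℝ^{2n}` if its
columns are linearly independent and span `ℓ` (i.e. form a basis of `ℓ`). -/
def IsFrameOf (n : ℕ) (M : Matrix (Fin n ⊕ Fin n) (Fin n) ℝ)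
    (ℓ : Submodule ℝ (Fin n ⊕ Fin n → ℝ)) : Prop :=
  LinearIndependent ℝ (fun j : Fin n => fun i => M i j) ∧
    Submodule.span ℝ (Set.range (fun j : Fin n => fun i => M i j)) = ℓ

/-- The `2n × n` matrix `𝐗 = (X; Y)` with `n × n` blocks `X` and `Y` stacked
vertically. -/
def vframe {n : ℕ} (X Y : Matrix (Fin n) (Fin n) ℝ) :
    Matrix (Fin n ⊕ Fin n) (Fin n) ℝ :=
  Matrix.fromRows X Y

/-- The complex matrix `X + iY` built from real matrices `X` and `Y`. -/
def cplx {n : ℕ} (X Y : Matrix (Fin n) (Fin n) ℝ) : Matrix (Fin n) (Fin n) ℂ :=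
  X.map (fun a => (a : ℂ)) + Complex.I • Y.map (fun a => (a : ℂ))

end

/-!
Isotropy of the frame's columns says exactly that `XᵀY` is symmetric, and then the imaginary part
of `(X + iY)ᴴ (X + iY) = (XᵀX + YᵀY) + i (XᵀY - YᵀX)` vanishes. What remains is the Gram matrix
`𝐗ᵀ𝐗` of the frame, invertible because its columns are independent. Finally `X - iY` is the
entrywise conjugate of `X + iY`.
-/

namespace IsFrameOf

variable {n : ℕ} {M : Matrix (Fin n ⊕ Fin n) (Fin n) ℝ} {ℓ : Submodule ℝ (Fin n ⊕ Fin n → ℝ)}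

theorem col_mem (hf : IsFrameOf n M ℓ) (j : Fin n) : M.col j ∈ ℓ :=
  hf.2 ▸ Submodule.subset_span ⟨j, rfl⟩

theorem mulVec_injective (hf : IsFrameOf n M ℓ) : Function.Injective M.mulVec :=
  Matrix.mulVec_injective_iff.2 hf.1

end IsFrameOf

theorem Matrix.isUnit_transpose_mul_self {m n R : Type*} [Fintype m] [Fintype n] [DecidableEq n]
    [Field R] [LinearOrder R] [IsStrictOrderedRing R] {A : Matrix m n R}
    (hA : Function.Injective A.mulVec) : IsUnit (Aᵀ * A) := by
  rwa [← Matrix.mulVec_injective_iff_isUnit, ← Matrix.coe_mulVecLin, ← LinearMap.ker_eq_bot,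
    Matrix.ker_mulVecLin_transpose_mul_self, LinearMap.ker_eq_bot, Matrix.coe_mulVecLin]

section Frame

variable {n : ℕ} (X Y : Matrix (Fin n) (Fin n) ℝ)

theorem vframe_transpose_mul_self : (vframe X Y)ᵀ * vframe X Y = Xᵀ * X + Yᵀ * Y := by
  rw [vframe, Matrix.transpose_fromRows, Matrix.fromCols_mul_fromRows]

theorem Jmat_mulVec_col_dotProduct_col (j k : Fin n) :
    Jmat n *ᵥ (vframe X Y).col j ⬝ᵥ (vframe X Y).col k = (Xᵀ * Y - Yᵀ * X) j k := by
  simp [Jmat, vframe, Matrix.mul_apply, dotProduct, Fintype.sum_sum_type, Matrix.mulVec,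
    Matrix.fromBlocks, Matrix.one_apply, mul_comm, sub_eq_neg_add]

theorem transpose_mul_comm_of_isotropic {ℓ : Submodule ℝ (Fin n ⊕ Fin n → ℝ)}
    (hiso : ∀ x ∈ ℓ, ∀ y ∈ ℓ, Jmat n *ᵥ x ⬝ᵥ y = 0) (hf : IsFrameOf n (vframe X Y) ℓ) :
    Xᵀ * Y = Yᵀ * X := by
  ext j k
  rw [← sub_eq_zero, ← Matrix.sub_apply, ← Jmat_mulVec_col_dotProduct_col]
  exact hiso _ (hf.col_mem j) _ (hf.col_mem k)

theorem cplx_conjTranspose_mul_self :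
    (cplx X Y)ᴴ * cplx X Y = cplx (Xᵀ * X + Yᵀ * Y) (Xᵀ * Y - Yᵀ * X) := by
  ext i j
  apply Complex.ext <;>
    simp [cplx, Matrix.mul_apply, Finset.sum_add_distrib, Matrix.conjTranspose_apply,
      sub_eq_add_neg]

theorem cplx_zero_right : cplx X 0 = (algebraMap ℝ ℂ).mapMatrix X := by
  simp [cplx]

theorem cplx_neg_right : cplx X (-Y) = (starRingEnd ℂ).mapMatrix (cplx X Y) := by
  ext i j
  simp [cplx]

end Frame

/-- For a Lagrangian frame `(X; Y)`, the complex matrices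
`X + iY` and `X - iY` are invertible. -/
theorem lagrangian_frame_cplx_invertible (n : ℕ) (X Y : Matrix (Fin n) (Fin n) ℝ)
    (ℓ : Submodule ℝ (Fin n ⊕ Fin n → ℝ)) (hℓ : IsLagrangian n ℓ)
    (hf : IsFrameOf n (vframe X Y) ℓ) :
    IsUnit (cplx X Y) ∧ IsUnit (cplx X (-Y)) := by
  have hsym : Xᵀ * Y = Yᵀ * X := transpose_mul_comm_of_isotropic X Y hℓ.2 hf
  have hgram : IsUnit (Xᵀ * X + Yᵀ * Y) :=
    vframe_transpose_mul_self X Y ▸ Matrix.isUnit_transpose_mul_self hf.mulVec_injective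
  have hM : IsUnit (cplx X Y) := by
    refine isUnit_of_mul_isUnit_right (x := (cplx X Y)ᴴ) ?_
    rw [cplx_conjTranspose_mul_self, hsym, sub_self, cplx_zero_right]
    exact hgram.map _
  exact ⟨hM, cplx_neg_right X Y ▸ hM.map _⟩
end

section
/- Let ℓ₀ and ℓ be Lagrangian subspaces of ℝ^{2n}, let Π₀ be the orthogonal projection onto ℓ₀, set τ₀ := 2Π₀ − I_{2n}, and let U be a real 2n×2n orthogonal matrix commuting with J such that U maps J(ℓ₀) onto ℓ. Define W := U τ₀ Uᵀ τ₀. Then ker(W + I_{2n}) = (ℓ ∩ ℓ₀) ⊕ J(ℓ ∩ ℓ₀), where the sum of the subspaces ℓ ∩ ℓ₀ and J(ℓ ∩ ℓ₀) of ℝ^{2n} is direct. -/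
open Matrix

section Aux

lemma matExt {m k : Type*} [Fintype k] [DecidableEq k]
    {A B : Matrix m k ℝ} (h : ∀ v, A.mulVec v = B.mulVec v) : A = B :=
  Matrix.toLin'.injective (LinearMap.ext fun v => by simpa [Matrix.toLin'_apply] using h v)

lemma Jsq (n : ℕ) : Jmat n * Jmat n = -1 := by
  simp [Jmat, Matrix.fromBlocks_multiply, ← Matrix.fromBlocks_one, Matrix.fromBlocks_neg]

lemma Jsq_vec (n : ℕ) (v : Fin n ⊕ Fin n → ℝ) :
    (Jmat n).mulVec ((Jmat n).mulVec v) = -v := by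
  rw [Matrix.mulVec_mulVec, Jsq, Matrix.neg_mulVec, Matrix.one_mulVec]

lemma Jinj (n : ℕ) : Function.Injective (Jmat n).mulVecLin := by
  intro x y hxy
  have h : (Jmat n).mulVec x = (Jmat n).mulVec y := by
    simpa [Matrix.mulVecLin_apply] using hxy
  have := congrArg ((Jmat n).mulVec) h
  rw [Jsq_vec, Jsq_vec] at this
  exact neg_injective this

lemma sq_refl {k : Type*} [Fintype k] [DecidableEq k]
    (Q : Matrix k k ℝ) (h : Q * Q = Q) :
    ((2:ℝ) • Q - 1) * ((2:ℝ) • Q - 1) = 1 := by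
  rw [sub_mul, mul_sub, mul_sub, smul_mul_assoc, mul_smul_comm, smul_smul, h, one_mul, mul_one]
  norm_num
  module

/-- For an orthogonal projection `P` onto a Lagrangian subspace `ℓ₀`,
the kernel of `P` equals `J(ℓ₀)`. -/
lemma proj_ker {n : ℕ} {ℓ₀ : Submodule ℝ (Fin n ⊕ Fin n → ℝ)} (h : IsLagrangian n ℓ₀)
    {P : Matrix (Fin n ⊕ Fin n) (Fin n ⊕ Fin n) ℝ} (hsym : Pᵀ = P)
    (hrange : ∀ v, P.mulVec v ∈ ℓ₀) (hfix : ∀ v ∈ ℓ₀, P.mulVec v = v) :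
    LinearMap.ker P.mulVecLin = Submodule.map (Jmat n).mulVecLin ℓ₀ := by
  obtain ⟨hrk, hlag⟩ := h
  have hdot : ∀ v w, P.mulVec v ⬝ᵥ w = v ⬝ᵥ P.mulVec w := by
    intro v w
    rw [Matrix.dotProduct_mulVec, ← Matrix.mulVec_transpose, hsym]
  have hker_iff : ∀ v, P.mulVec v = 0 ↔ ∀ w ∈ ℓ₀, v ⬝ᵥ w = 0 := by
    intro v
    constructor
    · intro h0 w hw
      have h1 : v ⬝ᵥ w = v ⬝ᵥ P.mulVec w := by rw [hfix w hw]
      rw [h1, ← hdot, h0, zero_dotProduct]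
    · intro hperp
      have h1 : P.mulVec v ⬝ᵥ P.mulVec v = 0 := by
        rw [hdot]; exact hperp _ (hrange _)
      exact dotProduct_self_eq_zero.mp h1
  have hJmem : ∀ x ∈ ℓ₀, P.mulVec ((Jmat n).mulVec x) = 0 := by
    intro x hx
    exact (hker_iff _).mpr (fun w hw => hlag x hx w hw)
  have hbot : ℓ₀ ⊓ Submodule.map (Jmat n).mulVecLin ℓ₀ = ⊥ := by
    rw [eq_bot_iff]
    rintro v ⟨hv, x, hx, rfl⟩
    have hv' : (Jmat n).mulVec x ∈ ℓ₀ := by simpa [Matrix.mulVecLin_apply] using hv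
    have h0 : (Jmat n).mulVec x ⬝ᵥ (Jmat n).mulVec x = 0 := hlag x hx _ hv'
    have : (Jmat n).mulVec x = 0 := dotProduct_self_eq_zero.mp h0
    simpa [Matrix.mulVecLin_apply, this] using Submodule.zero_mem ⊥
  have hJrank : Module.finrank ℝ (Submodule.map (Jmat n).mulVecLin ℓ₀) = n :=
    (LinearEquiv.finrank_eq (Submodule.equivMapOfInjective _ (Jinj n) ℓ₀)).symm.trans hrk
  have htop : ℓ₀ ⊔ Submodule.map (Jmat n).mulVecLin ℓ₀ = ⊤ := by
    apply Submodule.eq_top_of_finrank_eq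
    have hs := Submodule.finrank_sup_add_finrank_inf_eq ℓ₀
      (Submodule.map (Jmat n).mulVecLin ℓ₀)
    rw [hbot, finrank_bot, add_zero, hrk, hJrank] at hs
    rw [hs, Module.finrank_fintype_fun_eq_card]
    simp [Fintype.card_sum]
  apply le_antisymm
  · intro v hv
    have hv0 : P.mulVec v = 0 := by simpa [Matrix.mulVecLin_apply] using hv
    have hvtop : v ∈ ℓ₀ ⊔ Submodule.map (Jmat n).mulVecLin ℓ₀ := htop ▸ Submodule.mem_top
    obtain ⟨a, ha, b, hb, hab⟩ := Submodule.mem_sup.mp hvtop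
    obtain ⟨x, hx, rfl⟩ := hb
    have hPb : P.mulVec ((Jmat n).mulVecLin x) = 0 := by
      simpa [Matrix.mulVecLin_apply] using hJmem x hx
    have hPv : P.mulVec v = a := by
      rw [← hab, Matrix.mulVec_add, hfix a ha, hPb, add_zero]
    rw [hv0] at hPv
    have : v = (Jmat n).mulVecLin x := by rw [← hab, ← hPv, zero_add]
    rw [this]
    exact Submodule.mem_map_of_mem hx
  · rintro v ⟨x, hx, rfl⟩
    simpa [LinearMap.mem_ker, Matrix.mulVecLin_apply] using hJmem x hx

end Aux

/-- For Lagrangian subspaces `ℓ₀`, `ℓ`, the orthogonal projection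
`P₀` onto `ℓ₀`, `τ₀ = 2P₀ - I`, and an orthogonal `U` commuting with `J` with
`U(J(ℓ₀)) = ℓ`, the matrix `W = U τ₀ Uᵀ τ₀` satisfies
`ker (W + I) = (ℓ ∩ ℓ₀) ⊕ J(ℓ ∩ ℓ₀)`, the sum being direct. -/
theorem ker_W_add_one (n : ℕ) (ℓ₀ ℓ : Submodule ℝ (Fin n ⊕ Fin n → ℝ))
    (hℓ₀ : IsLagrangian n ℓ₀) (hℓ : IsLagrangian n ℓ)
    (P₀ : Matrix (Fin n ⊕ Fin n) (Fin n ⊕ Fin n) ℝ)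
    (hP₀sym : P₀ᵀ = P₀)
    (hP₀range : ∀ v, P₀.mulVec v ∈ ℓ₀)
    (hP₀fix : ∀ v ∈ ℓ₀, P₀.mulVec v = v)
    (U : Matrix (Fin n ⊕ Fin n) (Fin n ⊕ Fin n) ℝ)
    (hU₁ : Uᵀ * U = 1) (hU₂ : U * Uᵀ = 1) (hUJ : U * Jmat n = Jmat n * U)
    (hUmap : Submodule.map U.mulVecLin (Submodule.map (Jmat n).mulVecLin ℓ₀) = ℓ) :
    LinearMap.ker
        ((U * ((2 : ℝ) • P₀ - 1) * Uᵀ * ((2 : ℝ) • P₀ - 1) + 1).mulVecLin)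
      = (ℓ ⊓ ℓ₀) ⊔ Submodule.map (Jmat n).mulVecLin (ℓ ⊓ ℓ₀) ∧
    Disjoint (ℓ ⊓ ℓ₀) (Submodule.map (Jmat n).mulVecLin (ℓ ⊓ ℓ₀)) := by
  have hker₀ : LinearMap.ker P₀.mulVecLin = Submodule.map (Jmat n).mulVecLin ℓ₀ :=
    proj_ker hℓ₀ hP₀sym hP₀range hP₀fix
  have hUtU : ∀ v, Uᵀ.mulVec (U.mulVec v) = v := by
    intro v; rw [Matrix.mulVec_mulVec, hU₁, Matrix.one_mulVec]
  -- the reflected projection P onto ℓ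
  set P : Matrix (Fin n ⊕ Fin n) (Fin n ⊕ Fin n) ℝ := U * (1 - P₀) * Uᵀ with hPdef
  have hPvec : ∀ v, P.mulVec v = U.mulVec ((1 - P₀).mulVec (Uᵀ.mulVec v)) := by
    intro v; rw [Matrix.mulVec_mulVec, Matrix.mulVec_mulVec]
  have hPsym : Pᵀ = P := by
    simp [hPdef, Matrix.transpose_mul, Matrix.transpose_sub, hP₀sym, Matrix.mul_assoc]
  have hP₀idem_vec : ∀ v, P₀.mulVec (P₀.mulVec v) = P₀.mulVec v :=
    fun v => hP₀fix _ (hP₀range v)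
  have hsubmem : ∀ w, (1 - P₀).mulVec w ∈ Submodule.map (Jmat n).mulVecLin ℓ₀ := by
    intro w
    rw [← hker₀, LinearMap.mem_ker, Matrix.mulVecLin_apply, Matrix.sub_mulVec,
      Matrix.one_mulVec]
    rw [Matrix.mulVec_sub, hP₀idem_vec, sub_self]
  have hPrange : ∀ v, P.mulVec v ∈ ℓ := by
    intro v
    rw [hPvec, ← hUmap]
    exact Submodule.mem_map_of_mem (hsubmem _)
  have hPfix : ∀ v ∈ ℓ, P.mulVec v = v := by
    intro v hv
    rw [← hUmap] at hv
    obtain ⟨w, hw, rfl⟩ := hv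
    rw [← hker₀] at hw
    have hw0 : P₀.mulVec w = 0 := by simpa [Matrix.mulVecLin_apply] using hw
    simp only [Matrix.mulVecLin_apply]
    rw [hPvec, hUtU, Matrix.sub_mulVec, Matrix.one_mulVec, hw0, sub_zero]
  have hkerP : LinearMap.ker P.mulVecLin = Submodule.map (Jmat n).mulVecLin ℓ :=
    proj_ker hℓ hPsym hPrange hPfix
  -- matrix identities
  have hP₀idem : P₀ * P₀ = P₀ := matExt (by
    intro v; rw [← Matrix.mulVec_mulVec]; exact hP₀idem_vec v)
  have hPidem : P * P = P := matExt (by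
    intro v; rw [← Matrix.mulVec_mulVec]; exact hPfix _ (hPrange v))
  have hτ₀sq := sq_refl P₀ hP₀idem
  have hτsq := sq_refl P hPidem
  have hUτU : U * ((2:ℝ) • P₀ - 1) * Uᵀ = -((2:ℝ) • P - 1) := by
    rw [hPdef]
    rw [mul_sub, mul_smul_comm, mul_one, sub_mul, smul_mul_assoc]
    rw [mul_sub U (1:Matrix _ _ ℝ) P₀, mul_one, sub_mul, smul_sub, hU₂]
    module
  -- kernel membership characterisation
  have hmem : ∀ v, (U * ((2:ℝ) • P₀ - 1) * Uᵀ * ((2:ℝ) • P₀ - 1) + 1).mulVec v = 0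
      ↔ P.mulVec v = P₀.mulVec v := by
    intro v
    have hexp : (U * ((2:ℝ) • P₀ - 1) * Uᵀ * ((2:ℝ) • P₀ - 1) + 1).mulVec v
        = -(((2:ℝ) • P - 1).mulVec (((2:ℝ) • P₀ - 1).mulVec v)) + v := by
      rw [Matrix.add_mulVec, Matrix.one_mulVec, hUτU, neg_mul, Matrix.neg_mulVec,
        ← Matrix.mulVec_mulVec]
    rw [hexp]
    constructor
    · intro h0
      have h1 : ((2:ℝ) • P - 1).mulVec (((2:ℝ) • P₀ - 1).mulVec v) = v := by
        have := congrArg (· + ((2:ℝ) • P - 1).mulVec (((2:ℝ) • P₀ - 1).mulVec v)) h0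
        simpa [add_comm, add_assoc, add_left_comm] using this.symm
      have h2 := congrArg (((2:ℝ) • P - 1).mulVec) h1
      rw [Matrix.mulVec_mulVec, hτsq, Matrix.one_mulVec] at h2
      -- h2 : ((2 • P₀ - 1) *ᵥ v = (2 • P - 1) *ᵥ v
      rw [Matrix.sub_mulVec, Matrix.sub_mulVec, Matrix.smul_mulVec,
        Matrix.smul_mulVec, Matrix.one_mulVec, sub_left_inj] at h2
      have := smul_right_injective (Fin n ⊕ Fin n → ℝ) (two_ne_zero (α := ℝ)) h2
      exact this.symm
    · intro hPP
      have hτeq : ((2:ℝ) • P₀ - 1).mulVec v = ((2:ℝ) • P - 1).mulVec v := by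
        rw [Matrix.sub_mulVec, Matrix.sub_mulVec, Matrix.smul_mulVec,
          Matrix.smul_mulVec, hPP]
      rw [hτeq, Matrix.mulVec_mulVec, hτsq, Matrix.one_mulVec, neg_add_cancel]
  constructor
  · -- kernel = sup
    apply le_antisymm
    · intro v hv
      have hv0 : P.mulVec v = P₀.mulVec v :=
        (hmem v).mp (by rw [← Matrix.mulVecLin_apply]; exact LinearMap.mem_ker.mp hv)
      have hwℓ : P₀.mulVec v ∈ ℓ := by rw [← hv0]; exact hPrange v
      have hwℓ₀ : P₀.mulVec v ∈ ℓ₀ := hP₀range v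
      have hPw : P.mulVec (P₀.mulVec v) = P₀.mulVec v := hPfix _ hwℓ
      have hd₀ : P₀.mulVec (v - P₀.mulVec v) = 0 := by
        rw [Matrix.mulVec_sub, hP₀idem_vec, sub_self]
      have hdP : P.mulVec (v - P₀.mulVec v) = 0 := by
        rw [Matrix.mulVec_sub, hPw, hv0, sub_self]
      have hd₀' : v - P₀.mulVec v ∈ Submodule.map (Jmat n).mulVecLin ℓ₀ := by
        rw [← hker₀]; simpa [LinearMap.mem_ker, Matrix.mulVecLin_apply] using hd₀
      have hdP' : v - P₀.mulVec v ∈ Submodule.map (Jmat n).mulVecLin ℓ := by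
        rw [← hkerP]; simpa [LinearMap.mem_ker, Matrix.mulVecLin_apply] using hdP
      have hdmem : v - P₀.mulVec v ∈ Submodule.map (Jmat n).mulVecLin (ℓ ⊓ ℓ₀) := by
        rw [Submodule.map_inf _ (Jinj n)]
        exact ⟨hdP', hd₀'⟩
      have hvsum : v = P₀.mulVec v + (v - P₀.mulVec v) := by abel
      rw [hvsum]
      exact Submodule.add_mem_sup (⟨hwℓ, hwℓ₀⟩ : P₀.mulVec v ∈ ℓ ⊓ ℓ₀) hdmem
    · apply sup_le
      · rintro v ⟨hv₁, hv₂⟩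
        rw [LinearMap.mem_ker, Matrix.mulVecLin_apply, hmem v,
          hPfix v hv₁, hP₀fix v hv₂]
      · rintro v ⟨x, ⟨hx₁, hx₂⟩, rfl⟩
        have h1 : (Jmat n).mulVecLin x ∈ Submodule.map (Jmat n).mulVecLin ℓ :=
          Submodule.mem_map_of_mem hx₁
        have h2 : (Jmat n).mulVecLin x ∈ Submodule.map (Jmat n).mulVecLin ℓ₀ :=
          Submodule.mem_map_of_mem hx₂
        rw [← hkerP] at h1
        rw [← hker₀] at h2
        have h1' : P.mulVec ((Jmat n).mulVecLin x) = 0 := by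
          simpa [Matrix.mulVecLin_apply] using h1
        have h2' : P₀.mulVec ((Jmat n).mulVecLin x) = 0 := by
          simpa [Matrix.mulVecLin_apply] using h2
        rw [LinearMap.mem_ker, Matrix.mulVecLin_apply, hmem _, h1', h2']
  · -- disjointness
    rw [disjoint_iff]
    rw [eq_bot_iff]
    rintro v ⟨⟨_, hv₀⟩, x, ⟨hx₁, hx₂⟩, rfl⟩
    have hv' : (Jmat n).mulVec x ∈ ℓ₀ := by simpa [Matrix.mulVecLin_apply] using hv₀
    have h0 : (Jmat n).mulVec x ⬝ᵥ (Jmat n).mulVec x = 0 := hℓ₀.2 x hx₂ _ hv'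
    have : (Jmat n).mulVec x = 0 := dotProduct_self_eq_zero.mp h0
    simpa [Matrix.mulVecLin_apply, this] using Submodule.zero_mem (⊥ : Submodule ℝ _)
end

section
/- Let ℓ₁, ℓ₂ ⊆ ℝ^{2n} be Lagrangian subspaces with respective frames 𝐗₁ = (X₁; Y₁) and 𝐗₂ = (X₂; Y₂), and define the complex n×n matrix W̃ := −(X₁ + iY₁)(X₁ − iY₁)⁻¹(X₂ − iY₂)(X₂ + iY₂)⁻¹. Then the complex dimension of ker(W̃ + Iₙ) equals the real dimension of ℓ₁ ∩ ℓ₂; that is, the multiplicity of −1 as an eigenvalue of W̃ is precisely dim(ℓ₁ ∩ ℓ₂). -/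
open Matrix

/-!
Write `Aₖ = Xₖ + iYₖ` and `Bₖ = Xₖ - iYₖ`. For a Lagrangian frame `Xᵀ Y` is symmetric, so
`Aᴴ A` is the Gram matrix `XᵀX + YᵀY` of the frame; hence `A` and likewise `B` are invertible.
Then `v ↦ (B₁⁻¹ B₂ A₂⁻¹ v, A₂⁻¹ v)` identifies `ker (W̃ + 1)` with the solutions of
`A₁ c₁ = A₂ c₂`, `B₁ c₁ = B₂ c₂`, that is, of `X₁ c₁ = X₂ c₂`, `Y₁ c₁ = Y₂ c₂`: the kernel of the
complexification of the real matrix `[𝐗₁ | -𝐗₂]`. Rank is invariant under field extension, so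
this kernel has the same dimension as the real one, and since both frames are injective with
ranges `ℓ₁`, `ℓ₂`, the real kernel has dimension `dim (ℓ₁ ∩ ℓ₂)`.
-/

open Module LinearMap

namespace Matrix

section Rank

variable {l m n o : Type*} [Fintype n] [Fintype o] {K L : Type*} [Field K] [Field L]

theorem rank_fromBlocks_one_zero [Fintype l] [DecidableEq l] :
    (fromBlocks (1 : Matrix l l K) 0 0 (0 : Matrix o o K)).rank = Fintype.card l := by
  classical
  rw [← diagonal_one, ← diagonal_zero, fromBlocks_diagonal, rank_diagonal, Fintype.card_subtype,
    Finset.card_filter, Fintype.sum_sum_type]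
  simp

theorem rank_map_ringHom [Fintype m] [DecidableEq m] (f : K →+* L) (M : Matrix m m K) :
    (M.map f).rank = M.rank := by
  obtain ⟨V, U, e, hV, hU, hVMU⟩ := M.exists_rank_normal_form
  have hV' : IsUnit (V.map f).det := (isUnit_iff_isUnit_det _).mp (hV.map f.mapMatrix)
  have hU' : IsUnit (U.map f).det := (isUnit_iff_isUnit_det _).mp (hU.map f.mapMatrix)
  calc (M.map f).rank = (V.map f * M.map f * U.map f).rank := by
        rw [rank_mul_eq_left_of_isUnit_det _ _ hU', rank_mul_eq_right_of_isUnit_det _ _ hV']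
    _ = ((V * M * U).map f).rank := by simp only [Matrix.map_mul]
    _ = M.rank := by
        rw [hVMU, ← submatrix_map, fromBlocks_map, rank_submatrix]
        simpa using rank_fromBlocks_one_zero (l := Fin M.rank) (o := Fin (Fintype.card m - M.rank))

theorem rank_add_finrank_ker_mulVecLin (M : Matrix m n K) :
    M.rank + finrank K (ker M.mulVecLin) = Fintype.card n := by
  rw [rank, finrank_range_add_finrank_ker, finrank_fintype_fun_eq_card]

theorem finrank_ker_mulVecLin_map [Fintype m] [DecidableEq m] (f : K →+* L) (M : Matrix m m K) :
    finrank L (ker (M.map f).mulVecLin) = finrank K (ker M.mulVecLin) := by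
  have h := rank_add_finrank_ker_mulVecLin M
  rw [← rank_map_ringHom f, ← rank_add_finrank_ker_mulVecLin (M.map f)] at h
  omega

theorem range_mulVecLin_fromCols (F : Matrix m n K) (G : Matrix m o K) :
    range (fromCols F G).mulVecLin = range F.mulVecLin ⊔ range G.mulVecLin := by
  rw [range_mulVecLin, range_mulVecLin, range_mulVecLin, ← Submodule.span_union,
    ← Set.Sum.elim_range]
  congr
  ext i (j | j) <;> rfl

theorem finrank_ker_mulVecLin_fromCols (F : Matrix m n K) (G : Matrix m o K) :
    finrank K (ker (fromCols F G).mulVecLin) = finrank K (ker F.mulVecLin)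
      + finrank K (ker G.mulVecLin) + finrank K ↥(range F.mulVecLin ⊓ range G.mulVecLin) := by
  have hFG := rank_add_finrank_ker_mulVecLin (fromCols F G)
  have hF := rank_add_finrank_ker_mulVecLin F
  have hG := rank_add_finrank_ker_mulVecLin G
  have hsup := Submodule.finrank_sup_add_finrank_inf_eq (range F.mulVecLin) (range G.mulVecLin)
  rw [rank, range_mulVecLin_fromCols, Fintype.card_sum] at hFG
  rw [rank] at hF hG
  omega

end Rank

variable {m n : Type*} [Fintype n] {R K : Type*} [CommRing R] [Field K]

theorem mulVecLin_neg (M : Matrix m n R) : (-M).mulVecLin = -M.mulVecLin :=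
  LinearMap.ext fun v => neg_mulVec v M

theorem ker_mulVecLin_mul_of_isUnit [Fintype m] [DecidableEq m] {P : Matrix m m R}
    (hP : IsUnit P) (M : Matrix m n R) : ker (P * M).mulVecLin = ker M.mulVecLin := by
  rw [mulVecLin_mul,
    ker_comp_of_ker_eq_bot _ (ker_eq_bot_of_injective (mulVec_injective_of_isUnit hP))]

theorem map_mulVecLin_ker_neg_add_one_eq_ker_fromBlocks [DecidableEq n]
    {A₁ B₁ A₂ B₂ : Matrix n n K} (hB₁ : IsUnit B₁) (hA₂ : IsUnit A₂) :
    Submodule.map (fromRows (B₁⁻¹ * B₂ * A₂⁻¹) A₂⁻¹).mulVecLin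
        (ker (-(A₁ * B₁⁻¹ * B₂ * A₂⁻¹) + 1).mulVecLin)
      = ker (fromBlocks A₁ (-A₂) B₁ (-B₂)).mulVecLin := by
  have hB₁' : B₁ * B₁⁻¹ = 1 := mul_nonsing_inv _ ((isUnit_iff_isUnit_det _).mp hB₁)
  have hB₁'' : B₁⁻¹ * B₁ = 1 := nonsing_inv_mul _ ((isUnit_iff_isUnit_det _).mp hB₁)
  have hA₂' : A₂ * A₂⁻¹ = 1 := mul_nonsing_inv _ ((isUnit_iff_isUnit_det _).mp hA₂)
  have hA₂'' : A₂⁻¹ * A₂ = 1 := nonsing_inv_mul _ ((isUnit_iff_isUnit_det _).mp hA₂)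
  ext x
  constructor
  · rintro ⟨v, hv, rfl⟩
    have hv' : (A₁ * B₁⁻¹ * B₂ * A₂⁻¹ - 1) *ᵥ v = 0 := by
      rw [show A₁ * B₁⁻¹ * B₂ * A₂⁻¹ - 1 = -(-(A₁ * B₁⁻¹ * B₂ * A₂⁻¹) + 1) by abel,
        neg_mulVec, ← mulVecLin_apply, mem_ker.mp hv, neg_zero]
    have hSF : fromBlocks A₁ (-A₂) B₁ (-B₂) * fromRows (B₁⁻¹ * B₂ * A₂⁻¹) A₂⁻¹
        = fromRows (A₁ * B₁⁻¹ * B₂ * A₂⁻¹ - 1) 0 := by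
      simp [fromBlocks_mul_fromRows, ← mul_assoc, hB₁', hA₂', sub_eq_add_neg]
    rw [mem_ker, mulVecLin_apply, mulVecLin_apply, mulVec_mulVec, hSF]
    simp [hv']
  · intro hx
    have hx' := congrFun (mem_ker.mp hx)
    simp only [mulVecLin_apply, fromBlocks_mulVec, neg_mulVec, ← sub_eq_add_neg] at hx'
    have hA : A₁ *ᵥ (x ∘ Sum.inl) = A₂ *ᵥ (x ∘ Sum.inr) :=
      funext fun i => sub_eq_zero.mp (hx' (Sum.inl i))
    have hB : B₁ *ᵥ (x ∘ Sum.inl) = B₂ *ᵥ (x ∘ Sum.inr) :=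
      funext fun i => sub_eq_zero.mp (hx' (Sum.inr i))
    have hx₁ : B₁⁻¹ *ᵥ (B₂ *ᵥ (x ∘ Sum.inr)) = x ∘ Sum.inl := by
      rw [← hB, mulVec_mulVec, hB₁'', one_mulVec]
    refine ⟨A₂ *ᵥ (x ∘ Sum.inr), ?_, ?_⟩
    · rw [SetLike.mem_coe, mem_ker, mulVecLin_apply, add_mulVec, neg_mulVec, one_mulVec,
        mulVec_mulVec, Matrix.mul_assoc, hA₂'', Matrix.mul_one, ← mulVec_mulVec, ← mulVec_mulVec,
        hx₁, hA, neg_add_cancel]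
    · ext (i | i)
      · simpa [mulVec_mulVec, mul_assoc, hA₂''] using congrFun hx₁ i
      · simp [mulVec_mulVec, hA₂'']

theorem finrank_ker_neg_add_one_eq_finrank_ker_fromBlocks [DecidableEq n]
    {A₁ B₁ A₂ B₂ : Matrix n n K} (hB₁ : IsUnit B₁) (hA₂ : IsUnit A₂) :
    finrank K (ker (-(A₁ * B₁⁻¹ * B₂ * A₂⁻¹) + 1).mulVecLin)
      = finrank K (ker (fromBlocks A₁ (-A₂) B₁ (-B₂)).mulVecLin) := by
  have hA₂' : A₂ * A₂⁻¹ = 1 := mul_nonsing_inv _ ((isUnit_iff_isUnit_det _).mp hA₂)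
  have hF : Function.Injective (fromRows (B₁⁻¹ * B₂ * A₂⁻¹) A₂⁻¹).mulVecLin := fun v w h => by
    simpa [mulVec_mulVec, hA₂'] using congrArg (fun x => A₂ *ᵥ (x ∘ Sum.inr)) h
  rw [← map_mulVecLin_ker_neg_add_one_eq_ker_fromBlocks hB₁ hA₂,
    (Submodule.equivMapOfInjective _ hF _).finrank_eq]

end Matrix

section Lagrangian

open Matrix Complex

variable {n : ℕ} {ℓ : Submodule ℝ (Fin n ⊕ Fin n → ℝ)} {X Y : Matrix (Fin n) (Fin n) ℝ}

theorem IsFrameOf.range_mulVecLin {M : Matrix (Fin n ⊕ Fin n) (Fin n) ℝ}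
    (hf : IsFrameOf n M ℓ) : range M.mulVecLin = ℓ := by
  rw [Matrix.range_mulVecLin]
  exact hf.2

theorem IsFrameOf.ker_mulVecLin {M : Matrix (Fin n ⊕ Fin n) (Fin n) ℝ}
    (hf : IsFrameOf n M ℓ) : ker M.mulVecLin = ⊥ :=
  ker_eq_bot_of_injective (mulVec_injective_iff.mpr hf.1)

theorem IsFrameOf.isUnit_gram (hf : IsFrameOf n (vframe X Y) ℓ) :
    IsUnit (Xᵀ * X + Yᵀ * Y) := by
  have h := ker_mulVecLin_transpose_mul_self (vframe X Y)
  rw [hf.ker_mulVecLin, vframe, transpose_fromRows, fromCols_mul_fromRows] at h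
  exact mulVec_injective_iff_isUnit.mp (LinearMap.ker_eq_bot.mp h)

theorem IsLagrangian.transpose_mul_Jmat_mul {M : Matrix (Fin n ⊕ Fin n) (Fin n) ℝ}
    (hℓ : IsLagrangian n ℓ) (hf : IsFrameOf n M ℓ) : Mᵀ * Jmat n * M = 0 := by
  have hcol : ∀ j, M.col j ∈ ℓ := fun j => hf.range_mulVecLin ▸ ⟨Pi.single j 1, by simp⟩
  ext j k
  have h := hℓ.2 _ (hcol k) _ (hcol j)
  rw [dotProduct_comm, dotProduct_mulVec] at h
  rw [Matrix.mul_apply]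
  simpa [Matrix.mul_apply, vecMul, dotProduct] using h

theorem vframe_transpose_mul_Jmat_mul (X Y : Matrix (Fin n) (Fin n) ℝ) :
    (vframe X Y)ᵀ * Jmat n * vframe X Y = Yᵀ * X - Xᵀ * Y := by
  simp [vframe, Jmat, transpose_fromRows, fromCols_mul_fromBlocks, fromCols_mul_fromRows,
    sub_eq_add_neg]

theorem IsLagrangian.transpose_mul_comm (hℓ : IsLagrangian n ℓ)
    (hf : IsFrameOf n (vframe X Y) ℓ) : Xᵀ * Y = Yᵀ * X := by
  have h := hℓ.transpose_mul_Jmat_mul hf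
  rw [vframe_transpose_mul_Jmat_mul, sub_eq_zero] at h
  exact h.symm

theorem conjTranspose_cplx_mul_cplx (h : Xᵀ * Y = Yᵀ * X) :
    (cplx X Y)ᴴ * cplx X Y = (Xᵀ * X + Yᵀ * Y).map ofRealHom := by
  have hc : ∀ Z : Matrix (Fin n) (Fin n) ℝ, (Z.map ofRealHom)ᴴ = Zᵀ.map ofRealHom :=
    fun Z => by ext; simp
  have hm : ∀ Z W : Matrix (Fin n) (Fin n) ℝ,
      Z.map ofRealHom * W.map ofRealHom = (Z * W).map ofRealHom := fun Z W => Matrix.map_mul.symm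
  calc (cplx X Y)ᴴ * cplx X Y
      = (Xᵀ * X).map ofRealHom + I • ((Xᵀ * Y).map ofRealHom - (Yᵀ * X).map ofRealHom)
          + (Yᵀ * Y).map ofRealHom := by
        rw [show cplx X Y = X.map ofRealHom + I • Y.map ofRealHom from rfl]
        simp only [conjTranspose_add, conjTranspose_smul, hc, add_mul, mul_add,
          smul_mul_assoc, mul_smul_comm, hm, Complex.star_def, conj_I]
        simp only [smul_add, smul_smul, mul_neg, I_mul_I, neg_neg, one_smul]
        module
    _ = (Xᵀ * X + Yᵀ * Y).map ofRealHom := by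
        rw [h, sub_self, smul_zero, add_zero]
        exact (Matrix.map_add _ (map_add ofRealHom) _ _).symm

theorem isUnit_cplx (h : Xᵀ * Y = Yᵀ * X) (hG : IsUnit (Xᵀ * X + Yᵀ * Y)) :
    IsUnit (cplx X Y) := by
  have hG' := hG.map ofRealHom.mapMatrix
  rw [RingHom.mapMatrix_apply, ← conjTranspose_cplx_mul_cplx h, Matrix.isUnit_iff_isUnit_det,
    det_mul] at hG'
  exact (Matrix.isUnit_iff_isUnit_det _).mpr (isUnit_of_mul_isUnit_right hG')

theorem IsLagrangian.isUnit_cplx (hℓ : IsLagrangian n ℓ) (hf : IsFrameOf n (vframe X Y) ℓ) :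
    IsUnit (cplx X Y) :=
  _root_.isUnit_cplx (hℓ.transpose_mul_comm hf) hf.isUnit_gram

theorem IsLagrangian.isUnit_cplx_neg (hℓ : IsLagrangian n ℓ)
    (hf : IsFrameOf n (vframe X Y) ℓ) : IsUnit (cplx X (-Y)) :=
  _root_.isUnit_cplx (by simpa using hℓ.transpose_mul_comm hf) (by simpa using hf.isUnit_gram)

theorem fromBlocks_cplx_eq_mul_map_fromCols (X₁ Y₁ X₂ Y₂ : Matrix (Fin n) (Fin n) ℝ) :
    fromBlocks (cplx X₁ Y₁) (-cplx X₂ Y₂) (cplx X₁ (-Y₁)) (-cplx X₂ (-Y₂))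
      = fromBlocks 1 (I • 1) 1 (-I • 1)
        * (fromCols (vframe X₁ Y₁) (-vframe X₂ Y₂)).map ofRealHom := by
  rw [vframe, vframe, fromRows_neg, fromCols_fromRows_eq_fromBlocks, fromBlocks_map,
    fromBlocks_multiply]
  simp only [cplx, fromBlocks_inj]
  refine ⟨?_, ?_, ?_, ?_⟩ <;> ext <;> simp <;> ring

theorem isUnit_fromBlocks_one_smul_I :
    IsUnit (fromBlocks 1 (I • 1) 1 (-I • 1) : Matrix (Fin n ⊕ Fin n) (Fin n ⊕ Fin n) ℂ) := by
  rw [Matrix.isUnit_iff_isUnit_det, det_fromBlocks_one₁₁, one_mul,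
    show -I • 1 - I • 1 = (-2 * I) • (1 : Matrix (Fin n) (Fin n) ℂ) by module, Matrix.det_smul]
  simp

end Lagrangian

/-- For Lagrangian subspaces `ℓ₁`, `ℓ₂` with frames
`(X₁; Y₁)`, `(X₂; Y₂)` and
`W̃ = -(X₁ + iY₁)(X₁ - iY₁)⁻¹(X₂ - iY₂)(X₂ + iY₂)⁻¹`, the complex dimension of
`ker (W̃ + I)` equals the real dimension of `ℓ₁ ∩ ℓ₂`. -/
theorem dim_ker_W_add_one_eq_dim_inter (n : ℕ)
    (ℓ₁ ℓ₂ : Submodule ℝ (Fin n ⊕ Fin n → ℝ))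
    (hℓ₁ : IsLagrangian n ℓ₁) (hℓ₂ : IsLagrangian n ℓ₂)
    (X₁ Y₁ X₂ Y₂ : Matrix (Fin n) (Fin n) ℝ)
    (hf₁ : IsFrameOf n (vframe X₁ Y₁) ℓ₁) (hf₂ : IsFrameOf n (vframe X₂ Y₂) ℓ₂) :
    Module.finrank ℂ
        (LinearMap.ker
          ((-(cplx X₁ Y₁ * (cplx X₁ (-Y₁))⁻¹ * (cplx X₂ (-Y₂)) * (cplx X₂ Y₂)⁻¹)
            + 1).mulVecLin))
      = Module.finrank ℝ ↥(ℓ₁ ⊓ ℓ₂) := by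
  rw [Matrix.finrank_ker_neg_add_one_eq_finrank_ker_fromBlocks (hℓ₁.isUnit_cplx_neg hf₁)
      (hℓ₂.isUnit_cplx hf₂), fromBlocks_cplx_eq_mul_map_fromCols,
    Matrix.ker_mulVecLin_mul_of_isUnit isUnit_fromBlocks_one_smul_I,
    Matrix.finrank_ker_mulVecLin_map, Matrix.finrank_ker_mulVecLin_fromCols, Matrix.mulVecLin_neg,
    ker_neg, range_neg, hf₁.ker_mulVecLin, hf₂.ker_mulVecLin, hf₁.range_mulVecLin,
    hf₂.range_mulVecLin, finrank_bot, zero_add, zero_add]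
end

section
/- Let ℓ₁, ℓ₂ ⊆ ℝ^{2n} be Lagrangian subspaces with orthogonal projection matrices P₁ and P₂ respectively, and define the Souriau matrix W := −(2P₁ − I_{2n})(2P₂ − I_{2n}). Then W is orthogonal, W commutes with J, and ker(W + I_{2n}) = (ℓ₁ ∩ ℓ₂) ⊕ J(ℓ₁ ∩ ℓ₂), where the sum of the subspaces ℓ₁ ∩ ℓ₂ and J(ℓ₁ ∩ ℓ₂) of ℝ^{2n} is direct. -/
open Matrix

namespace SouriauAux
open Matrix

lemma mulVec_ext {m k : Type*} [Fintype k] [DecidableEq k] {M N : Matrix m k ℝ}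
    (h : ∀ v, M.mulVec v = N.mulVec v) : M = N := by
  ext i j
  have := congrFun (h (Pi.single j 1)) i
  simpa [Matrix.mulVec_single] using this

lemma Jmat_sq (n : ℕ) : Jmat n * Jmat n = -1 := by
  rw [Jmat, Matrix.fromBlocks_multiply, ← Matrix.fromBlocks_one, Matrix.fromBlocks_neg]
  norm_num

lemma Jmat_JJ (n : ℕ) (v : Fin n ⊕ Fin n → ℝ) :
    (Jmat n).mulVec ((Jmat n).mulVec v) = -v := by
  rw [Matrix.mulVec_mulVec, Jmat_sq, Matrix.neg_mulVec, Matrix.one_mulVec]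

variable {n : ℕ} {ℓ : Submodule ℝ (Fin n ⊕ Fin n → ℝ)}
  {P : Matrix (Fin n ⊕ Fin n) (Fin n ⊕ Fin n) ℝ}

lemma proj_J_zero (hlag : IsLagrangian n ℓ) (hsym : Pᵀ = P)
    (hrange : ∀ v, P.mulVec v ∈ ℓ) (hfix : ∀ v ∈ ℓ, P.mulVec v = v)
    {b : Fin n ⊕ Fin n → ℝ} (hb : b ∈ ℓ) :
    P.mulVec ((Jmat n).mulVec b) = 0 := by
  set u := P.mulVec ((Jmat n).mulVec b) with hu
  have hu' : u ∈ ℓ := hrange _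
  have h0 : u ⬝ᵥ u = 0 := by
    calc u ⬝ᵥ u = u ⬝ᵥ P.mulVec ((Jmat n).mulVec b) := rfl
    _ = (u ᵥ* P) ⬝ᵥ ((Jmat n).mulVec b) := by rw [Matrix.dotProduct_mulVec]
    _ = (P.mulVec u) ⬝ᵥ ((Jmat n).mulVec b) := by
          conv_lhs => rw [← hsym, Matrix.vecMul_transpose]
    _ = u ⬝ᵥ ((Jmat n).mulVec b) := by rw [hfix u hu']
    _ = ((Jmat n).mulVec b) ⬝ᵥ u := dotProduct_comm _ _
    _ = 0 := hlag.2 b hb u hu'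
  exact dotProduct_self_eq_zero.mp h0

lemma disjoint_map_J
    (hpair : ∀ x ∈ ℓ, ∀ y ∈ ℓ, (Jmat n).mulVec x ⬝ᵥ y = 0) :
    Disjoint ℓ (Submodule.map (Jmat n).mulVecLin ℓ) := by
  rw [Submodule.disjoint_def]
  intro x hx hx'
  obtain ⟨b, hb, rfl⟩ := hx'
  rw [← dotProduct_self_eq_zero]
  exact hpair b hb _ hx

/-- The linear equivalence given by J. -/
noncomputable def Jequiv (n : ℕ) : (Fin n ⊕ Fin n → ℝ) ≃ₗ[ℝ] (Fin n ⊕ Fin n → ℝ) :=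
  LinearEquiv.ofLinear (Jmat n).mulVecLin (-(Jmat n)).mulVecLin
    (by rw [← Matrix.mulVecLin_mul, mul_neg, Jmat_sq, neg_neg, Matrix.mulVecLin_one])
    (by rw [← Matrix.mulVecLin_mul, neg_mul, Jmat_sq, neg_neg, Matrix.mulVecLin_one])

lemma sup_map_J (hlag : IsLagrangian n ℓ) :
    ℓ ⊔ Submodule.map (Jmat n).mulVecLin ℓ = ⊤ := by
  apply Submodule.eq_top_of_finrank_eq
  have hmap : Submodule.map (Jmat n).mulVecLin ℓ
      = Submodule.map (Jequiv n : (Fin n ⊕ Fin n → ℝ) →ₗ[ℝ] (Fin n ⊕ Fin n → ℝ)) ℓ := rfl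
  have hfr : Module.finrank ℝ (Submodule.map (Jmat n).mulVecLin ℓ) = n := by
    rw [hmap, LinearEquiv.finrank_map_eq, hlag.1]
  have hdisj := disjoint_map_J hlag.2
  have h := Submodule.finrank_sup_add_finrank_inf_eq ℓ (Submodule.map (Jmat n).mulVecLin ℓ)
  rw [hdisj.eq_bot, finrank_bot, add_zero, hlag.1, hfr] at h
  rw [h, Module.finrank_pi]
  simp [Fintype.card_sum]

lemma PJ_plus_JP (hlag : IsLagrangian n ℓ) (hsym : Pᵀ = P)
    (hrange : ∀ v, P.mulVec v ∈ ℓ) (hfix : ∀ v ∈ ℓ, P.mulVec v = v) :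
    P * Jmat n + Jmat n * P = Jmat n := by
  apply mulVec_ext
  intro v
  have hv : v ∈ ℓ ⊔ Submodule.map (Jmat n).mulVecLin ℓ := by
    rw [sup_map_J hlag]; trivial
  obtain ⟨a, ha, c, hc, hac⟩ := Submodule.mem_sup.mp hv
  obtain ⟨b, hb, rfl⟩ := hc
  subst hac
  have e1 : P *ᵥ ((Jmat n) *ᵥ a) = 0 := proj_J_zero hlag hsym hrange hfix ha
  have e5 : P *ᵥ ((Jmat n) *ᵥ b) = 0 := proj_J_zero hlag hsym hrange hfix hb
  have e2 : (Jmat n) *ᵥ ((Jmat n) *ᵥ b) = -b := Jmat_JJ n b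
  have e3 : P *ᵥ b = b := hfix b hb
  have e4 : P *ᵥ a = a := hfix a ha
  simp only [Matrix.mulVecLin_apply, Matrix.add_mulVec, ← Matrix.mulVec_mulVec,
    Matrix.mulVec_add, e1, e2, e3, e4, e5, Matrix.mulVec_neg, Matrix.mulVec_zero]
  abel

end SouriauAux

/-- For Lagrangian subspaces `ℓ₁`, `ℓ₂` with orthogonal
projections `P₁`, `P₂`, the Souriau matrix `W = -(2P₁ - I)(2P₂ - I)` is
orthogonal, commutes with `J`, and `ker (W + I) = (ℓ₁ ∩ ℓ₂) ⊕ J(ℓ₁ ∩ ℓ₂)`,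
the sum being direct. -/
theorem souriau_matrix_properties (n : ℕ)
    (ℓ₁ ℓ₂ : Submodule ℝ (Fin n ⊕ Fin n → ℝ))
    (hℓ₁ : IsLagrangian n ℓ₁) (hℓ₂ : IsLagrangian n ℓ₂)
    (P₁ P₂ : Matrix (Fin n ⊕ Fin n) (Fin n ⊕ Fin n) ℝ)
    (hP₁sym : P₁ᵀ = P₁) (hP₁range : ∀ v, P₁.mulVec v ∈ ℓ₁)
    (hP₁fix : ∀ v ∈ ℓ₁, P₁.mulVec v = v)
    (hP₂sym : P₂ᵀ = P₂) (hP₂range : ∀ v, P₂.mulVec v ∈ ℓ₂)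
    (hP₂fix : ∀ v ∈ ℓ₂, P₂.mulVec v = v) :
    (-(((2 : ℝ) • P₁ - 1) * ((2 : ℝ) • P₂ - 1)))ᵀ
        * (-(((2 : ℝ) • P₁ - 1) * ((2 : ℝ) • P₂ - 1))) = 1 ∧
    (-(((2 : ℝ) • P₁ - 1) * ((2 : ℝ) • P₂ - 1)))
        * (-(((2 : ℝ) • P₁ - 1) * ((2 : ℝ) • P₂ - 1)))ᵀ = 1 ∧
    (-(((2 : ℝ) • P₁ - 1) * ((2 : ℝ) • P₂ - 1))) * Jmat n
        = Jmat n * (-(((2 : ℝ) • P₁ - 1) * ((2 : ℝ) • P₂ - 1))) ∧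
    LinearMap.ker ((-(((2 : ℝ) • P₁ - 1) * ((2 : ℝ) • P₂ - 1)) + 1).mulVecLin)
        = (ℓ₁ ⊓ ℓ₂) ⊔ Submodule.map (Jmat n).mulVecLin (ℓ₁ ⊓ ℓ₂) ∧
    Disjoint (ℓ₁ ⊓ ℓ₂) (Submodule.map (Jmat n).mulVecLin (ℓ₁ ⊓ ℓ₂)) := by
  set R₁ := (2 : ℝ) • P₁ - 1 with hR₁
  set R₂ := (2 : ℝ) • P₂ - 1 with hR₂
  have hidem₁ : P₁ * P₁ = P₁ := SouriauAux.mulVec_ext fun v => by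
    rw [← Matrix.mulVec_mulVec]; exact hP₁fix _ (hP₁range v)
  have hidem₂ : P₂ * P₂ = P₂ := SouriauAux.mulVec_ext fun v => by
    rw [← Matrix.mulVec_mulVec]; exact hP₂fix _ (hP₂range v)
  have hPJ₁ : P₁ * Jmat n + Jmat n * P₁ = Jmat n :=
    SouriauAux.PJ_plus_JP hℓ₁ hP₁sym hP₁range hP₁fix
  have hPJ₂ : P₂ * Jmat n + Jmat n * P₂ = Jmat n :=
    SouriauAux.PJ_plus_JP hℓ₂ hP₂sym hP₂range hP₂fix
  have hRR₁ : R₁ * R₁ = 1 := by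
    rw [hR₁]
    simp only [sub_mul, mul_sub, smul_mul_assoc, mul_smul_comm, hidem₁, one_mul, mul_one]
    module
  have hRR₂ : R₂ * R₂ = 1 := by
    rw [hR₂]
    simp only [sub_mul, mul_sub, smul_mul_assoc, mul_smul_comm, hidem₂, one_mul, mul_one]
    module
  have hT₁ : R₁ᵀ = R₁ := by
    rw [hR₁, Matrix.transpose_sub, Matrix.transpose_smul, Matrix.transpose_one, hP₁sym]
  have hT₂ : R₂ᵀ = R₂ := by
    rw [hR₂, Matrix.transpose_sub, Matrix.transpose_smul, Matrix.transpose_one, hP₂sym]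
  have hPJ₁' : P₁ * Jmat n = Jmat n - Jmat n * P₁ := eq_sub_of_add_eq hPJ₁
  have hPJ₂' : P₂ * Jmat n = Jmat n - Jmat n * P₂ := eq_sub_of_add_eq hPJ₂
  have hA₁ : R₁ * Jmat n = -(Jmat n * R₁) := by
    rw [hR₁]
    simp only [sub_mul, mul_sub, smul_mul_assoc, mul_smul_comm, hPJ₁', one_mul, mul_one]
    module
  have hA₂ : R₂ * Jmat n = -(Jmat n * R₂) := by
    rw [hR₂]
    simp only [sub_mul, mul_sub, smul_mul_assoc, mul_smul_comm, hPJ₂', one_mul, mul_one]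
    module
  refine ⟨?_, ?_, ?_, ?_, ?_⟩
  · rw [Matrix.transpose_neg, Matrix.transpose_mul, hT₁, hT₂, neg_mul_neg, mul_assoc,
      ← mul_assoc R₁ R₁, hRR₁, one_mul, hRR₂]
  · rw [Matrix.transpose_neg, Matrix.transpose_mul, hT₁, hT₂, neg_mul_neg, mul_assoc,
      ← mul_assoc R₂ R₂, hRR₂, one_mul, hRR₁]
  · have hG3 : R₁ * R₂ * Jmat n = Jmat n * (R₁ * R₂) := by
      rw [mul_assoc, hA₂, mul_neg, ← mul_assoc, hA₁, neg_mul, neg_neg, mul_assoc]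
    rw [neg_mul, hG3, mul_neg]
  · apply le_antisymm
    · intro v hv
      rw [LinearMap.mem_ker, Matrix.mulVecLin_apply] at hv
      have hv' : (R₁ * R₂) *ᵥ v = v := by
        rw [Matrix.add_mulVec, Matrix.neg_mulVec, Matrix.one_mulVec, neg_add_eq_zero] at hv
        exact hv
      set u := R₂ *ᵥ v with hu
      have hR₁u : R₁ *ᵥ u = v := by rw [hu, Matrix.mulVec_mulVec]; exact hv'
      have hR₁v : R₁ *ᵥ v = u := by
        rw [← hR₁u, Matrix.mulVec_mulVec, hRR₁, Matrix.one_mulVec]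
      have h1 : (2 : ℝ) • (P₁ *ᵥ v) = u + v := by
        rw [hR₁, Matrix.sub_mulVec, Matrix.smul_mulVec, Matrix.one_mulVec] at hR₁v
        exact sub_eq_iff_eq_add.mp hR₁v
      have h2 : (2 : ℝ) • (P₂ *ᵥ v) = u + v := by
        have hR₂v : R₂ *ᵥ v = u := hu.symm
        rw [hR₂, Matrix.sub_mulVec, Matrix.smul_mulVec, Matrix.one_mulVec] at hR₂v
        exact sub_eq_iff_eq_add.mp hR₂v
      have hPv : P₁ *ᵥ v = P₂ *ᵥ v :=
        smul_right_injective _ (two_ne_zero) (h1.trans h2.symm)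
      set a := P₁ *ᵥ v with hadef
      have ha₁ : a ∈ ℓ₁ := hP₁range v
      have ha₂ : a ∈ ℓ₂ := by rw [hPv]; exact hP₂range v
      set b := v - a with hb
      have hP₁b : P₁ *ᵥ b = 0 := by
        rw [hb, Matrix.mulVec_sub, hP₁fix a ha₁]; exact sub_self _
      have hP₂b : P₂ *ᵥ b = 0 := by
        rw [hb, Matrix.mulVec_sub, hP₂fix a ha₂, ← hPv]; exact sub_self _
      have hJb₁ : Jmat n *ᵥ b ∈ ℓ₁ := by
        have h := congrArg (fun M => M *ᵥ b) hPJ₁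
        simp only [Matrix.add_mulVec, ← Matrix.mulVec_mulVec, hP₁b, Matrix.mulVec_zero,
          add_zero] at h
        rw [← h]; exact hP₁range _
      have hJb₂ : Jmat n *ᵥ b ∈ ℓ₂ := by
        have h := congrArg (fun M => M *ᵥ b) hPJ₂
        simp only [Matrix.add_mulVec, ← Matrix.mulVec_mulVec, hP₂b, Matrix.mulVec_zero,
          add_zero] at h
        rw [← h]; exact hP₂range _
      have hbmem : b ∈ Submodule.map (Jmat n).mulVecLin (ℓ₁ ⊓ ℓ₂) := by
        refine ⟨-(Jmat n *ᵥ b), neg_mem (Submodule.mem_inf.mpr ⟨hJb₁, hJb₂⟩), ?_⟩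
        rw [Matrix.mulVecLin_apply, Matrix.mulVec_neg, SouriauAux.Jmat_JJ, neg_neg]
      exact Submodule.mem_sup.mpr
        ⟨a, Submodule.mem_inf.mpr ⟨ha₁, ha₂⟩, b, hbmem, by rw [hb]; abel⟩
    · refine sup_le ?_ ?_
      · intro x hx
        obtain ⟨hx₁, hx₂⟩ := Submodule.mem_inf.mp hx
        rw [LinearMap.mem_ker, Matrix.mulVecLin_apply]
        have e₂ : R₂ *ᵥ x = x := by
          rw [hR₂, Matrix.sub_mulVec, Matrix.smul_mulVec, Matrix.one_mulVec,
            hP₂fix x hx₂, two_smul]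
          abel
        have e₁ : R₁ *ᵥ x = x := by
          rw [hR₁, Matrix.sub_mulVec, Matrix.smul_mulVec, Matrix.one_mulVec,
            hP₁fix x hx₁, two_smul]
          abel
        rw [Matrix.add_mulVec, Matrix.neg_mulVec, Matrix.one_mulVec,
          ← Matrix.mulVec_mulVec, e₂, e₁, neg_add_cancel]
      · intro x hx
        obtain ⟨y, hy, rfl⟩ := hx
        obtain ⟨hy₁, hy₂⟩ := Submodule.mem_inf.mp hy
        rw [LinearMap.mem_ker, Matrix.mulVecLin_apply, Matrix.mulVecLin_apply]
        have f₂ : R₂ *ᵥ (Jmat n *ᵥ y) = -(Jmat n *ᵥ y) := by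
          rw [hR₂, Matrix.sub_mulVec, Matrix.smul_mulVec, Matrix.one_mulVec,
            SouriauAux.proj_J_zero hℓ₂ hP₂sym hP₂range hP₂fix hy₂, smul_zero, zero_sub]
        have f₁ : R₁ *ᵥ (Jmat n *ᵥ y) = -(Jmat n *ᵥ y) := by
          rw [hR₁, Matrix.sub_mulVec, Matrix.smul_mulVec, Matrix.one_mulVec,
            SouriauAux.proj_J_zero hℓ₁ hP₁sym hP₁range hP₁fix hy₁, smul_zero, zero_sub]
        rw [Matrix.add_mulVec, Matrix.neg_mulVec, Matrix.one_mulVec,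
          ← Matrix.mulVec_mulVec, f₂, Matrix.mulVec_neg, f₁, neg_neg, neg_add_cancel]
  · exact SouriauAux.disjoint_map_J fun x hx y hy => hℓ₁.2 x hx.1 y hy.1
end
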